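/- For integers 2 ≤ n ≤ N, the directed graph Γ_N is acyclic: it contains no nonempty directed cycle. -/

import Mathlib

/-- A face of the `N`-dimensional cube `I^N`, encoded as a function assigning to each
coordinate position either a digit (`some false` = 0, `some true` = 1) or an
asterisk (`none`). -/
abbrev CubeFace (N : ℕ) := Fin N → Option Bool

/-- `τ` is a `k`-face: exactly `k` positions carry an asterisk. -/
def IsFace {N : ℕ} (k : ℕ) (τ : CubeFace N) : Prop :=
  (Finset.filter (fun i => τ i = none) Finset.univ).card = k

/-- The digit `κ` associated to the asterisk position `p` of `f`: if `p` is the `k`-th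
asterisk position of `f` (counting 1-based from the left), then `κ = 0` (i.e. `false`)
for odd `k` and `κ = 1` (i.e. `true`) for even `k`.  Equivalently, `κ` is `true` iff the
number of asterisk positions strictly before `p` is odd. -/
def kappa {N : ℕ} (f : CubeFace N) (p : Fin N) : Bool :=
  decide (Odd ((Finset.filter (fun q => q < p ∧ f q = none) Finset.univ).card))

/-- `g` is obtained from `f` by replacing the asterisk at position `p` by the digit `d`. -/
def SubfaceAt {N : ℕ} (f g : CubeFace N) (p : Fin N) (d : Bool) : Prop :=
  f p = none ∧ g p = some d ∧ ∀ q, q ≠ p → g q = f q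

/-- `g` is an incoming subface of `f`: it is obtained from `f` by replacing the asterisk
at some position `p` by the digit `κ(f, p)`. -/
def Incoming {N : ℕ} (f g : CubeFace N) : Prop := ∃ p, SubfaceAt f g p (kappa f p)

/-- `g` is an outgoing subface of `f`: it is obtained from `f` by replacing the asterisk
at some position `p` by the digit different from `κ(f, p)`. -/
def Outgoing {N : ℕ} (f g : CubeFace N) : Prop := ∃ p, SubfaceAt f g p (!kappa f p)

/-- The order of a face `g`: the number of `n`-faces of the cube for which `g` is an
incoming subface. -/
noncomputable def faceOrder {N : ℕ} (n : ℕ) (g : CubeFace N) : ℕ :=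
  Nat.card {f : CubeFace N // IsFace n f ∧ Incoming f g}

/-- The edge relation of the directed graph `Γ_N`: its vertices are the `n`-faces and
`(n-1)`-faces of `I^N`; there is an edge directed from an `(n-1)`-face `g` to an
`n`-face `f` if `g` is an incoming subface of `f`, and an edge directed from `f` to `g`
if `g` is an outgoing subface of `f`. -/
def GammaEdge {N : ℕ} (n : ℕ) (a b : CubeFace N) : Prop :=
  (IsFace (n - 1) a ∧ IsFace n b ∧ Incoming b a) ∨
  (IsFace n a ∧ IsFace (n - 1) b ∧ Outgoing a b)

/-! Record at each position of a face the sign `0` for an asterisk, `1` for the digit `κ` and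
`-1` for the other digit. Replacing the asterisk at `p` changes nothing before `p` (where `κ`
only depends on the asterisks to the left) and turns the `0` at `p` into `1` for an incoming
subface and into `-1` for an outgoing one. So the sign vector strictly decreases in the
lexicographic order along every edge of `Γ_N`, which therefore has no cycle. -/

section

variable {N : ℕ}

theorem kappa_congr {f g : CubeFace N} {i : Fin N} (h : ∀ q < i, g q = f q) :
    kappa g i = kappa f i := by
  unfold kappa
  congr 3
  exact Finset.filter_congr fun q _ => and_congr_right fun hq => by rw [h q hq]

def CubeFace.signature (f : CubeFace N) : Lex (Fin N → SignType) :=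
  toLex fun i => (f i).elim 0 fun d => if d = kappa f i then 1 else -1

open CubeFace

variable {f g : CubeFace N} {p : Fin N} {d : Bool}

theorem SubfaceAt.kappa_eq (h : SubfaceAt f g p d) {i : Fin N} (hi : i ≤ p) :
    kappa g i = kappa f i :=
  kappa_congr fun q hq => h.2.2 q (hq.trans_le hi).ne

theorem SubfaceAt.signature_apply_of_lt (h : SubfaceAt f g p d) {j : Fin N} (hj : j < p) :
    ofLex (signature g) j = ofLex (signature f) j := by
  simp only [signature, ofLex_toLex, h.2.2 j hj.ne, h.kappa_eq hj.le]

theorem SubfaceAt.signature_lt (h : SubfaceAt f g p (kappa f p)) : signature f < signature g :=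
  ⟨p, fun j hj => (h.signature_apply_of_lt hj).symm, by
    simp [signature, h.1, h.2.1, h.kappa_eq le_rfl]⟩

theorem SubfaceAt.signature_gt (h : SubfaceAt f g p (!kappa f p)) : signature g < signature f :=
  ⟨p, fun _ hj => h.signature_apply_of_lt hj, by simp [signature, h.1, h.2.1, h.kappa_eq le_rfl]⟩

theorem CubeFace.signature_lt_of_gammaEdge {n : ℕ} {a b : CubeFace N} (h : GammaEdge n a b) :
    signature b < signature a := by
  rcases h with ⟨-, -, p, hp⟩ | ⟨-, -, p, hp⟩
  · exact hp.signature_lt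
  · exact hp.signature_gt

end

theorem Relation.not_transGen_self_of_map_lt {α β : Type*} [Preorder β] {r : α → α → Prop}
    (φ : α → β) (hφ : ∀ a b, r a b → φ b < φ a) (a : α) : ¬ Relation.TransGen r a a := by
  intro h
  have : Relation.TransGen (· > ·) (φ a) (φ a) := h.lift φ hφ
  rw [Relation.transGen_eq_self] at this
  exact lt_irrefl _ this

theorem stmt6_general (n N : ℕ) :
    ∀ a : CubeFace N, ¬ Relation.TransGen (GammaEdge n) a a :=
  Relation.not_transGen_self_of_map_lt CubeFace.signature fun _ _ =>
    CubeFace.signature_lt_of_gammaEdge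

/-- The directed graph `Γ_N` is acyclic: there is no nonempty directed cycle. -/
theorem stmt6 (n N : ℕ) (h2 : 2 ≤ n) (hN : n ≤ N) :
    ∀ a : CubeFace N, ¬ Relation.TransGen (GammaEdge n) a a :=
  stmt6_general n N
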